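/- arXiv:2111.03175 — 2 statements merged into one kernel-verified Lean document; each statement's English description precedes it below -/
import Mathlib

section
/- Let d ≥ 2 and let {Y_{l,m} : 1 ≤ m ≤ đ_l} be an orthonormal basis of spherical harmonics of degree l on √d S^{d−1}, viewed as harmonic homogeneous polynomials of degree l. Then for all l, l' ≥ 1 and all m, m': E[(∇Y_{l,m}(w) − (l/d) Y_{l,m}(w) w) · ∇Y_{l',m'}(w) | w uniform on √d S^{d−1}] = ((l² + l'² + (l + l')(d − 2))/(2d)) · δ_{ll'} δ_{mm'}. In particular this expectation vanishes unless (l,m) = (l',m'), in which case it equals l(l + d − 2)/d. -/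
open MeasureTheory ProbabilityTheory

noncomputable section

/-- The uniform probability measure on the sphere `√d S^{d−1} ⊆ ℝ^d`
(normalized `(d−1)`-dimensional Hausdorff measure). -/
def sphereUniform (d : ℕ) : Measure (EuclideanSpace ℝ (Fin d)) :=
  (μH[(d : ℝ) - 1] (Metric.sphere (0 : EuclideanSpace ℝ (Fin d)) (Real.sqrt d)))⁻¹ •
    (μH[(d : ℝ) - 1]).restrict (Metric.sphere (0 : EuclideanSpace ℝ (Fin d)) (Real.sqrt d))


open MvPolynomial

/-- The Laplacian `∇² = ∑ i ∂ᵢ²` on polynomials. -/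
def mvLap {d : ℕ} (f : MvPolynomial (Fin d) ℝ) : MvPolynomial (Fin d) ℝ :=
  ∑ i : Fin d, pderiv i (pderiv i f)

/-- `đ_l`, the dimension of the space of degree-`l` harmonic homogeneous polynomials in
`d` variables. -/
def harmDim (d l : ℕ) : ℕ := (d + l - 1).choose (d - 1) - (d + l - 3).choose (d - 1)

/-- Evaluation of a polynomial at a point of `ℝ^d`. -/
def sphEval {d : ℕ} (p : MvPolynomial (Fin d) ℝ) (x : EuclideanSpace ℝ (Fin d)) : ℝ :=
  MvPolynomial.eval (fun i => x i) p

/-! Write `⟨p⟩` for the mean of `p` over the sphere `|x|² = d`. Euler's identity `x · ∇Y' = l' Y'`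
turns the integrand into `∇Y · ∇Y' - (l l' / d) Y Y'`, and for harmonic `Y, Y'` one has
`Δ(Y Y') = 2 ∇Y · ∇Y'`. The key identity is `⟨Δp⟩ = k (k + d - 2) / d ⟨p⟩` for `p` homogeneous of
degree `k`: the Fischer decomposition `p = h + |x|² r` with `h` harmonic reduces it to degree
`k - 2`, once harmonic polynomials of positive degree are known to have mean zero. They do, because
`z = ∑ₘ ⟨Y_{l,m}⟩ Y_{l,m}` represents the mean on the harmonic polynomials of degree `l`, hence is
invariant under the orthogonal group, and an invariant harmonic polynomial of positive degree
vanishes. By induction on the smaller degree, the key identity also makes harmonic polynomials of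
different degrees orthogonal, and everything reduces to `⟨Y_{l,m} Y_{l',m'}⟩ = δ_{ll'} δ_{mm'}`. -/

section Development

variable {d : ℕ}

def mvLapₗ (d : ℕ) : MvPolynomial (Fin d) ℝ →ₗ[ℝ] MvPolynomial (Fin d) ℝ :=
  ∑ i : Fin d, (pderiv i).toLinearMap ∘ₗ (pderiv i).toLinearMap

@[simp] lemma mvLapₗ_apply (p : MvPolynomial (Fin d) ℝ) : mvLapₗ d p = mvLap p := by
  simp [mvLapₗ, mvLap]

@[simp] lemma mvLap_zero : mvLap (0 : MvPolynomial (Fin d) ℝ) = 0 := by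
  simp [mvLap]

lemma mvLap_smul (c : ℝ) (p : MvPolynomial (Fin d) ℝ) : mvLap (c • p) = c • mvLap p := by
  simp only [← mvLapₗ_apply, map_smul]

lemma mvLap_sub (p q : MvPolynomial (Fin d) ℝ) : mvLap (p - q) = mvLap p - mvLap q := by
  simp only [← mvLapₗ_apply, map_sub]

def harmonicSubmodule (d l : ℕ) : Submodule ℝ (MvPolynomial (Fin d) ℝ) :=
  homogeneousSubmodule (Fin d) ℝ l ⊓ LinearMap.ker (mvLapₗ d)

lemma mem_harmonicSubmodule {l : ℕ} {p : MvPolynomial (Fin d) ℝ} :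
    p ∈ harmonicSubmodule d l ↔ p.IsHomogeneous l ∧ mvLap p = 0 := by
  simp [harmonicSubmodule, mem_homogeneousSubmodule]

lemma MvPolynomial.IsHomogeneous.smul {p : MvPolynomial (Fin d) ℝ} {n : ℕ}
    (hp : p.IsHomogeneous n) (c : ℝ) : (c • p).IsHomogeneous n := by
  rw [smul_eq_C_mul]
  exact hp.C_mul c

lemma pderiv_eq_zero_of_isHomogeneous_zero {p : MvPolynomial (Fin d) ℝ} (hp : p.IsHomogeneous 0)
    (i : Fin d) : pderiv i p = 0 := by
  rw [← totalDegree_zero_iff_isHomogeneous, totalDegree_eq_zero_iff_eq_C] at hp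
  rw [hp, pderiv_C]

lemma pderiv_comm (p : MvPolynomial (Fin d) ℝ) (i j : Fin d) :
    pderiv i (pderiv j p) = pderiv j (pderiv i p) := by
  rcases eq_or_ne i j with rfl | hij
  · rfl
  ext s
  simp only [coeff_pderiv, Finsupp.add_apply, Finsupp.single_eq_of_ne hij,
    Finsupp.single_eq_of_ne hij.symm, add_zero, add_right_comm s]
  ring

lemma mvLap_pderiv (p : MvPolynomial (Fin d) ℝ) (i : Fin d) :
    mvLap (pderiv i p) = pderiv i (mvLap p) := by
  simp only [mvLap, map_sum, pderiv_comm _ i]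

lemma mvLap_mul (p q : MvPolynomial (Fin d) ℝ) :
    mvLap (p * q) = mvLap p * q + 2 * ∑ i, pderiv i p * pderiv i q + p * mvLap q := by
  simp only [mvLap, Finset.mul_sum, Finset.sum_mul, ← Finset.sum_add_distrib]
  refine Finset.sum_congr rfl fun i _ => ?_
  simp only [pderiv_mul, map_add]
  ring

lemma MvPolynomial.IsHomogeneous.mvLap {p : MvPolynomial (Fin d) ℝ} {n : ℕ}
    (hp : p.IsHomogeneous n) : (mvLap p).IsHomogeneous (n - 2) :=
  IsHomogeneous.sum _ _ _ fun i _ => by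
    simpa [Nat.sub_sub] using (hp.pderiv (i := i)).pderiv (i := i)

lemma mvLap_eq_zero_of_isHomogeneous {p : MvPolynomial (Fin d) ℝ} {n : ℕ}
    (hp : p.IsHomogeneous n) (hn : n ≤ 1) : mvLap p = 0 :=
  Finset.sum_eq_zero fun i _ => pderiv_eq_zero_of_isHomogeneous_zero
    (by simpa [Nat.sub_eq_zero_of_le hn] using hp.pderiv (i := i)) i

def mvNormSq (d : ℕ) : MvPolynomial (Fin d) ℝ := ∑ i, X i ^ 2

lemma isHomogeneous_mvNormSq : (mvNormSq d).IsHomogeneous 2 :=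
  IsHomogeneous.sum _ _ _ fun i _ => by simpa using (isHomogeneous_X ℝ i).pow 2

lemma pderiv_mvNormSq (i : Fin d) : pderiv i (mvNormSq d) = 2 * X i := by
  classical
  simp [mvNormSq, pderiv_X, Pi.single_apply]

lemma mvLap_mvNormSq_mul {q : MvPolynomial (Fin d) ℝ} {m : ℕ} (hq : q.IsHomogeneous m) :
    mvLap (mvNormSq d * q) = (2 * d + 4 * m : ℝ) • q + mvNormSq d * mvLap q := by
  have hlap : mvLap (mvNormSq d) = 2 * d := by
    have h2 : ∀ i : Fin d, pderiv i (2 : MvPolynomial (Fin d) ℝ) = 0 := fun i => by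
      exact_mod_cast (pderiv i).map_natCast 2
    simp [mvLap, pderiv_mvNormSq, h2, mul_comm]
  rw [mvLap_mul, hlap]
  simp only [pderiv_mvNormSq, mul_assoc, ← Finset.mul_sum, hq.sum_X_mul_pderiv, smul_eq_C_mul,
    nsmul_eq_mul, map_add, map_mul, map_natCast, map_ofNat]
  ring

lemma mvLap_mvNormSq_pow (t : ℕ) :
    mvLap (mvNormSq d ^ (t + 1)) = (2 * (t + 1) * (d + 2 * t) : ℝ) • mvNormSq d ^ t := by
  induction t with
  | zero =>
    simpa [mvLap_eq_zero_of_isHomogeneous (isHomogeneous_one (Fin d) ℝ) zero_le_one]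
      using mvLap_mvNormSq_mul (isHomogeneous_one (Fin d) ℝ)
  | succ t ih =>
    rw [pow_succ', mvLap_mvNormSq_mul (isHomogeneous_mvNormSq.pow (t + 1)), ih, mul_smul_comm,
      ← pow_succ', ← add_smul]
    congr 1
    push_cast
    ring

lemma mvNormSq_ne_zero (hd : 0 < d) : mvNormSq d ≠ 0 := by
  intro h
  have := congrArg (eval fun _ => (1 : ℝ)) h
  simp [mvNormSq] at this
  omega

/-- Fischer decomposition. The shift `α` is what makes the induction work: with
`r = β⁻¹ (q - |x|² s)`, `β = α + 2d + 4m`, the equation in degree `m` becomes the same equation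
for `s` in degree `m - 2` with `β` in place of `α`. -/
lemma exists_smul_add_mvLap_mvNormSq_mul_eq (hd : 0 < d) (m : ℕ) :
    ∀ α : ℝ, 0 ≤ α → ∀ q : MvPolynomial (Fin d) ℝ, q.IsHomogeneous m →
      ∃ r : MvPolynomial (Fin d) ℝ, r.IsHomogeneous m ∧ α • r + mvLap (mvNormSq d * r) = q := by
  induction m using Nat.strong_induction_on with
  | _ m ih =>
  intro α hα q hq
  set β : ℝ := α + 2 * d + 4 * m
  have hβ : β ≠ 0 := by positivity
  obtain ⟨s, hs, hsq⟩ : ∃ s : MvPolynomial (Fin d) ℝ,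
      (mvNormSq d * s).IsHomogeneous m ∧ β • s + mvLap (mvNormSq d * s) = mvLap q := by
    rcases lt_or_ge m 2 with hm | hm
    · exact ⟨0, by simpa using isHomogeneous_zero _ _ m,
        by simp [mvLap_eq_zero_of_isHomogeneous hq (by omega)]⟩
    · obtain ⟨s, hs, hsq⟩ := ih (m - 2) (by omega) β (by positivity) _ hq.mvLap
      exact ⟨s, by simpa [show 2 + (m - 2) = m by omega] using isHomogeneous_mvNormSq.mul hs, hsq⟩
  have hr := (hq.sub hs).smul β⁻¹
  have hlap : mvLap (β⁻¹ • (q - mvNormSq d * s)) = s := by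
    rw [mvLap_smul, mvLap_sub, ← hsq, add_sub_cancel_right, inv_smul_smul₀ hβ]
  refine ⟨_, hr, ?_⟩
  rw [mvLap_mvNormSq_mul hr, hlap, ← add_assoc, ← add_smul, ← add_assoc,
    smul_inv_smul₀ hβ, sub_add_cancel]

@[simp] lemma sphEval_zero (x : EuclideanSpace ℝ (Fin d)) : sphEval 0 x = 0 := by simp [sphEval]

@[simp] lemma sphEval_smul (c : ℝ) (p : MvPolynomial (Fin d) ℝ) (x : EuclideanSpace ℝ (Fin d)) :
    sphEval (c • p) x = c * sphEval p x := by simp [sphEval]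

@[simp] lemma sphEval_mul (p q : MvPolynomial (Fin d) ℝ) (x : EuclideanSpace ℝ (Fin d)) :
    sphEval (p * q) x = sphEval p x * sphEval q x := by simp [sphEval]

@[simp] lemma sphEval_pow (p : MvPolynomial (Fin d) ℝ) (n : ℕ) (x : EuclideanSpace ℝ (Fin d)) :
    sphEval (p ^ n) x = sphEval p x ^ n := by simp [sphEval]

lemma continuous_sphEval (p : MvPolynomial (Fin d) ℝ) : Continuous (sphEval p) :=
  (continuous_eval p).comp (by fun_prop)

lemma sphEval_smul_of_isHomogeneous {p : MvPolynomial (Fin d) ℝ} {n : ℕ} (hp : p.IsHomogeneous n)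
    (r : ℝ) (x : EuclideanSpace ℝ (Fin d)) : sphEval p (r • x) = r ^ n * sphEval p x := by
  simp only [sphEval, eval_eq, Finset.mul_sum, PiLp.smul_apply, smul_eq_mul, mul_pow,
    Finset.prod_mul_distrib, Finset.prod_pow_eq_pow_sum]
  refine Finset.sum_congr rfl fun s hs => ?_
  rw [← hp.degree_eq_sum_deg_support hs]
  ring

lemma sphEval_mvNormSq (x : EuclideanSpace ℝ (Fin d)) : sphEval (mvNormSq d) x = ‖x‖ ^ 2 := by
  simp [sphEval, mvNormSq, EuclideanSpace.real_norm_sq_eq]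

lemma eq_of_sphEval_eq {p q : MvPolynomial (Fin d) ℝ} (h : ∀ x, sphEval p x = sphEval q x) :
    p = q :=
  MvPolynomial.funext fun v => by simpa [sphEval] using h (WithLp.toLp 2 v)

lemma sphereUniform_eq_zero_or_isProbabilityMeasure (d : ℕ) :
    sphereUniform d = 0 ∨ IsProbabilityMeasure (sphereUniform d) := by
  unfold sphereUniform
  set c := μH[(d : ℝ) - 1] (Metric.sphere (0 : EuclideanSpace ℝ (Fin d)) (Real.sqrt d))
  by_cases h0 : c = 0
  · left
    simp [Measure.restrict_eq_zero.mpr h0]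
  by_cases htop : c = ⊤
  · left
    simp [htop]
  · right
    constructor
    simpa using ENNReal.inv_mul_cancel h0 htop

instance (d : ℕ) : IsFiniteMeasure (sphereUniform d) := by
  rcases sphereUniform_eq_zero_or_isProbabilityMeasure d with h | h
  · rw [h]; infer_instance
  · infer_instance

lemma ae_mem_sphere_sphereUniform (d : ℕ) :
    ∀ᵐ x ∂sphereUniform d, x ∈ Metric.sphere (0 : EuclideanSpace ℝ (Fin d)) (Real.sqrt d) :=
  Measure.ae_smul_measure (ae_restrict_mem Metric.isClosed_sphere.measurableSet) _

lemma integrable_sphEval (p : MvPolynomial (Fin d) ℝ) :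
    Integrable (sphEval p) (sphereUniform d) := by
  obtain ⟨C, hC⟩ := (isCompact_sphere (0 : EuclideanSpace ℝ (Fin d)) (Real.sqrt d))
    |>.exists_bound_of_continuousOn (continuous_sphEval p).continuousOn
  exact .of_bound (continuous_sphEval p).aestronglyMeasurable C
    ((ae_mem_sphere_sphereUniform d).mono hC)

def sphereMean (d : ℕ) : MvPolynomial (Fin d) ℝ →ₗ[ℝ] ℝ where
  toFun p := ∫ x, sphEval p x ∂sphereUniform d
  map_add' p q := by
    simp only [sphEval, map_add]
    exact integral_add (integrable_sphEval p) (integrable_sphEval q)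
  map_smul' c p := by
    simp only [sphEval_smul, RingHom.id_apply]
    exact integral_const_mul c _

lemma sphereMean_apply (p : MvPolynomial (Fin d) ℝ) :
    sphereMean d p = ∫ x, sphEval p x ∂sphereUniform d := rfl

lemma sphereMean_mvNormSq_mul (p : MvPolynomial (Fin d) ℝ) :
    sphereMean d (mvNormSq d * p) = d * sphereMean d p := by
  rw [sphereMean_apply, sphereMean_apply, ← integral_const_mul]
  refine integral_congr_ae ((ae_mem_sphere_sphereUniform d).mono fun x hx => ?_)
  rw [sphEval_mul, sphEval_mvNormSq, mem_sphere_zero_iff_norm.mp hx, Real.sq_sqrt d.cast_nonneg]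

lemma pderiv_aeval {σ τ R : Type*} [CommSemiring R] [Fintype σ] (g : σ → MvPolynomial τ R)
    (p : MvPolynomial σ R) (j : τ) :
    pderiv j (aeval g p) = ∑ i, pderiv j (g i) * aeval g (pderiv i p) := by
  classical
  induction p using MvPolynomial.induction_on with
  | C a => simp
  | add p q hp hq => simp only [map_add, hp, hq, mul_add, Finset.sum_add_distrib]
  | mul_X p k hp =>
    simp only [map_mul, aeval_X, pderiv_mul, hp, pderiv_X, Pi.single_apply, mul_one, map_add,
      apply_ite (aeval g), map_zero, mul_add, Finset.sum_add_distrib, Finset.sum_mul, mul_ite,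
      mul_zero, Finset.sum_ite_eq, Finset.mem_univ, if_true]
    simp only [mul_assoc, mul_comm (aeval g p)]

/-- `x ↦ p (R x)`, using that the `i`-th row of the matrix of `R` is `R⁻¹ eᵢ`. -/
def compIsometry (R : EuclideanSpace ℝ (Fin d) ≃ₗᵢ[ℝ] EuclideanSpace ℝ (Fin d))
    (p : MvPolynomial (Fin d) ℝ) : MvPolynomial (Fin d) ℝ :=
  aeval (fun i => ∑ j, C (R.symm (EuclideanSpace.single i 1) j) * X j) p

lemma sphEval_compIsometry (R : EuclideanSpace ℝ (Fin d) ≃ₗᵢ[ℝ] EuclideanSpace ℝ (Fin d))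
    (p : MvPolynomial (Fin d) ℝ) (x : EuclideanSpace ℝ (Fin d)) :
    sphEval (compIsometry R p) x = sphEval p (R x) := by
  have hcoord : ∀ i, R x i = ∑ j, R.symm (EuclideanSpace.single i 1) j * x j := by
    intro i
    have := EuclideanSpace.inner_single_left i (1 : ℝ) (R x)
    rw [← R.symm.inner_map_map, LinearIsometryEquiv.symm_apply_apply] at this
    simpa [PiLp.inner_apply, mul_comm] using this.symm
  change aeval (fun i => x i) (aeval _ p) = aeval (fun i => R x i) p
  rw [comp_aeval_apply]
  congr 2 with i
  simp [hcoord, mul_comm]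

lemma isHomogeneous_compIsometry
    (R : EuclideanSpace ℝ (Fin d) ≃ₗᵢ[ℝ] EuclideanSpace ℝ (Fin d))
    {p : MvPolynomial (Fin d) ℝ} {n : ℕ} (hp : p.IsHomogeneous n) :
    (compIsometry R p).IsHomogeneous n := by
  unfold compIsometry
  simpa only [one_mul] using hp.aeval _ fun i =>
    IsHomogeneous.sum Finset.univ _ 1 fun j _ => (isHomogeneous_X ℝ j).C_mul _

lemma sum_symm_single_mul_symm_single
    (R : EuclideanSpace ℝ (Fin d) ≃ₗᵢ[ℝ] EuclideanSpace ℝ (Fin d)) (i i' : Fin d) :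
    ∑ j, R.symm (EuclideanSpace.single i 1) j * R.symm (EuclideanSpace.single i' 1) j
      = if i = i' then 1 else 0 := by
  have := R.symm.inner_map_map (EuclideanSpace.single i (1 : ℝ)) (EuclideanSpace.single i' 1)
  simp only [PiLp.inner_apply] at this
  simpa [mul_comm, PiLp.single_apply, eq_comm] using this

lemma mvLap_compIsometry (R : EuclideanSpace ℝ (Fin d) ≃ₗᵢ[ℝ] EuclideanSpace ℝ (Fin d))
    (p : MvPolynomial (Fin d) ℝ) : mvLap (compIsometry R p) = compIsometry R (mvLap p) := by
  classical
  set u : Fin d → EuclideanSpace ℝ (Fin d) := fun i => R.symm (EuclideanSpace.single i 1)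
  simp only [mvLap, compIsometry]
  set g : Fin d → MvPolynomial (Fin d) ℝ := fun i => ∑ k, C (u i k) * X k
  have hg : ∀ i j, pderiv j (g i) = C (u i j) := by
    intro i j
    simp [g, pderiv_X, Pi.single_apply]
  calc ∑ j, pderiv j (pderiv j (aeval g p))
      = ∑ i, ∑ i', C (∑ j, u i j * u i' j) * aeval g (pderiv i' (pderiv i p)) := by
        simp only [pderiv_aeval, hg, map_sum, pderiv_C_mul, Finset.mul_sum, map_mul, Finset.sum_mul]
        rw [Finset.sum_comm]
        refine Finset.sum_congr rfl fun i _ => ?_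
        rw [Finset.sum_comm]
        refine Finset.sum_congr rfl fun i' _ => ?_
        exact Finset.sum_congr rfl fun j _ => by ring
    _ = ∑ i, aeval g (pderiv i (pderiv i p)) := by
        simp [u, sum_symm_single_mul_symm_single, apply_ite C]
    _ = aeval g (∑ i, pderiv i (pderiv i p)) := (map_sum _ _ _).symm

lemma compIsometry_mem_harmonicSubmodule
    (R : EuclideanSpace ℝ (Fin d) ≃ₗᵢ[ℝ] EuclideanSpace ℝ (Fin d)) {l : ℕ}
    {p : MvPolynomial (Fin d) ℝ} (hp : p ∈ harmonicSubmodule d l) :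
    compIsometry R p ∈ harmonicSubmodule d l := by
  rw [mem_harmonicSubmodule] at hp ⊢
  refine ⟨isHomogeneous_compIsometry R hp.1, ?_⟩
  rw [mvLap_compIsometry, hp.2, compIsometry, map_zero]

lemma measurePreserving_sphereUniform
    (R : EuclideanSpace ℝ (Fin d) ≃ₗᵢ[ℝ] EuclideanSpace ℝ (Fin d)) :
    MeasurePreserving R (sphereUniform d) (sphereUniform d) := by
  have hpre : R ⁻¹' Metric.sphere 0 (Real.sqrt d) = Metric.sphere 0 (Real.sqrt d) := by
    ext x
    simp
  refine ⟨R.continuous.measurable, ?_⟩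
  rw [sphereUniform, Measure.map_smul]
  congr 1
  conv_lhs => rw [← hpre]
  have hmap : Measure.map R μH[(d : ℝ) - 1] = μH[(d : ℝ) - 1] :=
    R.toIsometryEquiv.map_hausdorffMeasure _
  rw [← Measure.restrict_map R.continuous.measurable Metric.isClosed_sphere.measurableSet, hmap]

lemma sphereMean_compIsometry (R : EuclideanSpace ℝ (Fin d) ≃ₗᵢ[ℝ] EuclideanSpace ℝ (Fin d))
    (p : MvPolynomial (Fin d) ℝ) : sphereMean d (compIsometry R p) = sphereMean d p := by
  simp only [sphereMean_apply, sphEval_compIsometry]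
  exact (measurePreserving_sphereUniform R).integral_comp R.toHomeomorph.measurableEmbedding _

lemma eq_zero_of_forall_compIsometry_eq (hd : 0 < d) {l : ℕ} (hl : 1 ≤ l)
    {z : MvPolynomial (Fin d) ℝ} (hz : z ∈ harmonicSubmodule d l)
    (hinv : ∀ R : EuclideanSpace ℝ (Fin d) ≃ₗᵢ[ℝ] EuclideanSpace ℝ (Fin d), compIsometry R z = z) :
    z = 0 := by
  obtain ⟨hzl, hzh⟩ := mem_harmonicSubmodule.mp hz
  set e : EuclideanSpace ℝ (Fin d) := EuclideanSpace.single ⟨0, hd⟩ 1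
  have he : ‖e‖ = 1 := by simp [e]
  -- `z` is radial, since a reflection maps `e` to `x / ‖x‖`.
  have hval : ∀ x, sphEval z x = ‖x‖ ^ l * sphEval z e := by
    intro x
    rcases eq_or_ne x 0 with rfl | hx
    · simpa [zero_pow (by omega : l ≠ 0)] using sphEval_smul_of_isHomogeneous hzl 0 0
    have hx' : ‖x‖ ≠ 0 := norm_ne_zero_iff.mpr hx
    have hR := Submodule.reflection_sub (v := e) (w := ‖x‖⁻¹ • x)
      (by simp [he, norm_smul, hx'])
    conv_lhs => rw [← smul_inv_smul₀ hx' x]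
    rw [sphEval_smul_of_isHomogeneous hzl, ← hR, ← sphEval_compIsometry, hinv]
  suffices hc : sphEval z e = 0 from eq_of_sphEval_eq fun x => by simp [hval x, hc]
  rcases Nat.even_or_odd l with ⟨t, rfl⟩ | hodd
  · obtain ⟨s, rfl⟩ : ∃ s, t = s + 1 := ⟨t - 1, by omega⟩
    have hzN : z = sphEval z e • mvNormSq d ^ (s + 1) := eq_of_sphEval_eq fun x => by
      rw [hval x, sphEval_smul, sphEval_pow, sphEval_mvNormSq, ← pow_mul]
      ring_nf
    have hlap : sphEval z e • (2 * (s + 1) * (d + 2 * s) : ℝ) • mvNormSq d ^ s = 0 := by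
      rw [← mvLap_mvNormSq_pow, ← mvLap_smul, ← hzN, hzh]
    simpa [pow_ne_zero, mvNormSq_ne_zero hd, Nat.cast_add_one_ne_zero,
      (by positivity : (d : ℝ) + 2 * s ≠ 0)] using hlap
  · have h := hval (-e)
    rw [norm_neg, he, one_pow, one_mul, ← neg_one_smul ℝ e, sphEval_smul_of_isHomogeneous hzl,
      hodd.neg_one_pow] at h
    linarith

section OrthonormalFamily

variable {ι : Type*} [Fintype ι] [DecidableEq ι] {u : ι → MvPolynomial (Fin d) ℝ}

lemma sphereMean_mul_sum_smul
    (horth : ∀ i j, sphereMean d (u i * u j) = if i = j then 1 else 0) (c : ι → ℝ) (i : ι) :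
    sphereMean d (u i * ∑ j, c j • u j) = c i := by
  simp [Finset.mul_sum, horth]

lemma eq_zero_of_forall_sphereMean_mul_eq_zero
    (horth : ∀ i j, sphereMean d (u i * u j) = if i = j then 1 else 0)
    {g : MvPolynomial (Fin d) ℝ} (hg : g ∈ Submodule.span ℝ (Set.range u))
    (h : ∀ i, sphereMean d (u i * g) = 0) : g = 0 := by
  obtain ⟨c, rfl⟩ := (Submodule.mem_span_range_iff_exists_fun ℝ).mp hg
  simp_rw [sphereMean_mul_sum_smul horth] at h
  simp [h]

lemma sphereMean_eq_zero_of_mem_harmonicSubmodule (hd : 0 < d)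
    (horth : ∀ i j, sphereMean d (u i * u j) = if i = j then 1 else 0) {l : ℕ}
    (hspan : Submodule.span ℝ (Set.range u) = harmonicSubmodule d l) (hl : 1 ≤ l)
    {h : MvPolynomial (Fin d) ℝ} (hh : h ∈ harmonicSubmodule d l) : sphereMean d h = 0 := by
  have hu : ∀ i, u i ∈ harmonicSubmodule d l := fun i => hspan ▸ Submodule.subset_span ⟨i, rfl⟩
  set z := ∑ i, sphereMean d (u i) • u i
  have hz : z ∈ harmonicSubmodule d l :=
    Submodule.sum_mem _ fun i _ => Submodule.smul_mem _ _ (hu i)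
  have hrep : ∀ f ∈ harmonicSubmodule d l, sphereMean d (f * z) = sphereMean d f := by
    rw [← hspan]
    refine LinearMap.eqOn_span' (f := sphereMean d ∘ₗ LinearMap.mulRight ℝ z) ?_
    rintro _ ⟨i, rfl⟩
    exact sphereMean_mul_sum_smul horth _ i
  have hinv : ∀ R, compIsometry R z = z := by
    intro R
    refine sub_eq_zero.mp (eq_zero_of_forall_sphereMean_mul_eq_zero horth
      (hspan ▸ Submodule.sub_mem _ (compIsometry_mem_harmonicSubmodule R hz) hz) fun i => ?_)
    have hcomp : u i * compIsometry R z = compIsometry R (compIsometry R.symm (u i) * z) :=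
      eq_of_sphEval_eq fun x => by simp [sphEval_compIsometry]
    rw [mul_sub, map_sub, hcomp, sphereMean_compIsometry,
      hrep _ (compIsometry_mem_harmonicSubmodule R.symm (hu i)), sphereMean_compIsometry,
      hrep _ (hu i), sub_self]
  simpa [eq_zero_of_forall_compIsometry_eq hd hl hz hinv] using (hrep h hh).symm

end OrthonormalFamily

lemma pderiv_mem_harmonicSubmodule {l : ℕ} {p : MvPolynomial (Fin d) ℝ}
    (hp : p ∈ harmonicSubmodule d l) (i : Fin d) : pderiv i p ∈ harmonicSubmodule d (l - 1) := by
  rw [mem_harmonicSubmodule] at hp ⊢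
  exact ⟨hp.1.pderiv, by rw [mvLap_pderiv, hp.2, map_zero]⟩

lemma sphereMean_mvLap (hd : 0 < d)
    (hmean : ∀ l, 1 ≤ l → ∀ h ∈ harmonicSubmodule d l, sphereMean d h = 0) (k : ℕ)
    {p : MvPolynomial (Fin d) ℝ} (hp : p.IsHomogeneous k) :
    sphereMean d (mvLap p) = k * (k + d - 2) / d * sphereMean d p := by
  induction k using Nat.strong_induction_on generalizing p with
  | _ k ih =>
  rcases le_or_gt k 1 with hk | hk
  · rw [mvLap_eq_zero_of_isHomogeneous hp hk, map_zero]
    interval_cases k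
    · simp
    · have hp1 := mem_harmonicSubmodule.mpr ⟨hp, mvLap_eq_zero_of_isHomogeneous hp le_rfl⟩
      simp [hmean 1 le_rfl p hp1]
  obtain ⟨r, hr, hrp⟩ := exists_smul_add_mvLap_mvNormSq_mul_eq hd (k - 2) 0 le_rfl _ hp.mvLap
  rw [zero_smul, zero_add] at hrp
  have hNr : (mvNormSq d * r).IsHomogeneous k := by
    simpa [show 2 + (k - 2) = k by omega] using isHomogeneous_mvNormSq.mul hr
  have hmeanp : sphereMean d p = d * sphereMean d r := by
    have := hmean k (by omega) (p - mvNormSq d * r)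
      (mem_harmonicSubmodule.mpr ⟨hp.sub hNr, by rw [mvLap_sub, hrp, sub_self]⟩)
    rw [map_sub, sphereMean_mvNormSq_mul] at this
    linarith
  rw [← hrp, mvLap_mvNormSq_mul hr, map_add, map_smul, sphereMean_mvNormSq_mul, ih _ (by omega) hr,
    hmeanp, Nat.cast_sub (by omega), smul_eq_mul]
  have : (d : ℝ) ≠ 0 := by positivity
  field_simp
  push_cast
  ring

lemma sphereMean_mul_of_mem_harmonicSubmodule (hd : 0 < d)
    (hmean : ∀ l, 1 ≤ l → ∀ h ∈ harmonicSubmodule d l, sphereMean d h = 0) {l l' : ℕ}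
    {u v : MvPolynomial (Fin d) ℝ} (hu : u ∈ harmonicSubmodule d l)
    (hv : v ∈ harmonicSubmodule d l') :
    (l + l') * (l + l' + d - 2) / d * sphereMean d (u * v)
      = 2 * ∑ i, sphereMean d (pderiv i u * pderiv i v) := by
  rw [mem_harmonicSubmodule] at hu hv
  have := sphereMean_mvLap hd hmean _ (hu.1.mul hv.1)
  rw [mvLap_mul, hu.2, hv.2, zero_mul, mul_zero, zero_add, add_zero, two_mul, map_add, map_sum]
    at this
  push_cast at this
  rw [← this, two_mul]

lemma sphereMean_mul_eq_zero_of_lt (hd : 2 ≤ d)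
    (hmean : ∀ l, 1 ≤ l → ∀ h ∈ harmonicSubmodule d l, sphereMean d h = 0) (l : ℕ) :
    ∀ {l' : ℕ}, l < l' → ∀ {u v : MvPolynomial (Fin d) ℝ}, u ∈ harmonicSubmodule d l →
      v ∈ harmonicSubmodule d l' → sphereMean d (u * v) = 0 := by
  have hgreen : ∀ {l l' : ℕ} {u v : MvPolynomial (Fin d) ℝ}, l < l' → u ∈ harmonicSubmodule d l →
      v ∈ harmonicSubmodule d l' → (∀ i, sphereMean d (pderiv i u * pderiv i v) = 0) →
      sphereMean d (u * v) = 0 := by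
    intro l l' u v hll' hu hv hgrad
    have h := sphereMean_mul_of_mem_harmonicSubmodule (by omega) hmean hu hv
    have hl : (1 : ℝ) ≤ l + l' := by exact_mod_cast (by omega : 1 ≤ l + l')
    have hd' : (2 : ℝ) ≤ d := by exact_mod_cast hd
    have hc : (l + l' : ℝ) * (l + l' + d - 2) / d ≠ 0 := by
      apply div_ne_zero <;> nlinarith
    simpa [hgrad, hc] using h
  induction l with
  | zero =>
    intro l' hll' u v hu hv
    refine hgreen hll' hu hv fun i => ?_
    rw [pderiv_eq_zero_of_isHomogeneous_zero (mem_harmonicSubmodule.mp hu).1, zero_mul, map_zero]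
  | succ l ih =>
    intro l' hll' u v hu hv
    exact hgreen hll' hu hv fun i => ih (l' := l' - 1) (by omega)
      (by simpa using pderiv_mem_harmonicSubmodule hu i) (pderiv_mem_harmonicSubmodule hv i)

lemma sum_tangent_mul_eq {p q : MvPolynomial (Fin d) ℝ} {n : ℕ} (hq : q.IsHomogeneous n) (c : ℝ)
    (x : EuclideanSpace ℝ (Fin d)) :
    ∑ i, (sphEval (pderiv i p) x - c * sphEval p x * x i) * sphEval (pderiv i q) x
      = sphEval (∑ i, pderiv i p * pderiv i q - (c * n) • (p * q)) x := by
  have h := congrArg (sphEval · x) hq.sum_X_mul_pderiv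
  simp only [sphEval, map_sum, map_mul, eval_X, nsmul_eq_mul, map_natCast, map_sub, smul_eval]
    at h ⊢
  simp only [sub_mul, Finset.sum_sub_distrib, mul_assoc, ← Finset.mul_sum, h]
  ring

lemma integral_tangent_mul_gradient (hd : 0 < d)
    (hmean : ∀ l, 1 ≤ l → ∀ h ∈ harmonicSubmodule d l, sphereMean d h = 0) {l l' : ℕ}
    {u v : MvPolynomial (Fin d) ℝ} (hu : u ∈ harmonicSubmodule d l)
    (hv : v ∈ harmonicSubmodule d l') :
    ∫ w, ∑ i, (sphEval (pderiv i u) w - ((l : ℝ) / d) * sphEval u w * w i)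
        * sphEval (pderiv i v) w ∂sphereUniform d
      = ((l + l') * (l + l' + d - 2) / (2 * d) - l * l' / d) * sphereMean d (u * v) := by
  have hgreen := sphereMean_mul_of_mem_harmonicSubmodule hd hmean hu hv
  simp_rw [sum_tangent_mul_eq (mem_harmonicSubmodule.mp hv).1, ← sphereMean_apply, map_sub,
    map_sum, map_smul, smul_eq_mul]
  linear_combination (-1 / 2 : ℝ) * hgreen

end Development

/-- for an orthonormal basis `Y_{l,m}` of spherical harmonics, for `l, l' ≥ 1`,
`E[(∇Y_{l,m}(w) − (l/d) Y_{l,m}(w) w) · ∇Y_{l',m'}(w)]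
  = ((l² + l'² + (l + l')(d − 2))/(2d)) δ_{ll'} δ_{mm'}`;
in particular it vanishes unless `(l,m) = (l',m')`, when it equals `l(l + d − 2)/d`. -/
theorem tangent_gradient_expectation (d : ℕ) (hd : 2 ≤ d)
    (Y : (l : ℕ) → Fin (harmDim d l) → MvPolynomial (Fin d) ℝ)
    (hhom : ∀ l m, (Y l m).IsHomogeneous l)
    (hharm : ∀ l m, mvLap (Y l m) = 0)
    (horth : ∀ l (m m' : Fin (harmDim d l)),
      ∫ x, sphEval (Y l m) x * sphEval (Y l m') x ∂(sphereUniform d)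
        = if m = m' then 1 else 0)
    (hspan : ∀ l (p : MvPolynomial (Fin d) ℝ), p.IsHomogeneous l → mvLap p = 0 →
      p ∈ Submodule.span ℝ (Set.range (Y l))) :
    (∀ (l l' : ℕ), 1 ≤ l → 1 ≤ l' → ∀ (m : Fin (harmDim d l)) (m' : Fin (harmDim d l')),
      (∫ w, ∑ i, (sphEval (pderiv i (Y l m)) w - ((l : ℝ) / d) * sphEval (Y l m) w * w i)
          * sphEval (pderiv i (Y l' m')) w ∂(sphereUniform d))
        = if l = l' ∧ (m : ℕ) = (m' : ℕ) then
            ((l : ℝ) ^ 2 + (l' : ℝ) ^ 2 + ((l : ℝ) + (l' : ℝ)) * ((d : ℝ) - 2)) / (2 * d)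
          else 0) ∧
    (∀ (l : ℕ), 1 ≤ l → ∀ (m : Fin (harmDim d l)),
      (∫ w, ∑ i, (sphEval (pderiv i (Y l m)) w - ((l : ℝ) / d) * sphEval (Y l m) w * w i)
          * sphEval (pderiv i (Y l m)) w ∂(sphereUniform d))
        = (l : ℝ) * ((l : ℝ) + (d : ℝ) - 2) / d) := by
  have hY : ∀ l m, Y l m ∈ harmonicSubmodule d l := fun l m =>
    mem_harmonicSubmodule.mpr ⟨hhom l m, hharm l m⟩
  have horth' : ∀ l (m m' : Fin (harmDim d l)),
      sphereMean d (Y l m * Y l m') = if m = m' then 1 else 0 := by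
    simpa [sphereMean_apply] using horth
  have hspan' : ∀ l, Submodule.span ℝ (Set.range (Y l)) = harmonicSubmodule d l := fun l =>
    le_antisymm (Submodule.span_le.mpr (Set.range_subset_iff.mpr (hY l)))
      fun p hp => hspan l p (mem_harmonicSubmodule.mp hp).1 (mem_harmonicSubmodule.mp hp).2
  have hmean : ∀ l, 1 ≤ l → ∀ h ∈ harmonicSubmodule d l, sphereMean d h = 0 :=
    fun l hl _ => sphereMean_eq_zero_of_mem_harmonicSubmodule (by omega) (horth' l) (hspan' l) hl
  have hgram : ∀ l l' (m : Fin (harmDim d l)) (m' : Fin (harmDim d l')),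
      sphereMean d (Y l m * Y l' m') = if l = l' ∧ (m : ℕ) = m' then 1 else 0 := by
    intro l l' m m'
    rcases lt_trichotomy l l' with h | rfl | h
    · simp [h.ne, sphereMean_mul_eq_zero_of_lt hd hmean l h (hY l m) (hY l' m')]
    · simp [horth', Fin.ext_iff]
    · simp [h.ne', mul_comm (Y l m), sphereMean_mul_eq_zero_of_lt hd hmean l' h (hY l' m') (hY l m)]
  refine ⟨fun l l' _ _ m m' => ?_, fun l _ m => ?_⟩
  · rw [integral_tangent_mul_gradient (by omega) hmean (hY l m) (hY l' m'), hgram]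
    split_ifs with h
    · obtain ⟨rfl, -⟩ := h
      field_simp
      ring
    · simp
  · rw [integral_tangent_mul_gradient (by omega) hmean (hY l m) (hY l m), hgram,
      if_pos ⟨rfl, rfl⟩]
    field_simp
    ring

end
end

section
/- Let d ≥ 2, l ≥ 1, let {Y_{l,m}} be an orthonormal basis of degree-l spherical harmonics on √d S^{d−1}, and let L_{ab} = x_a ∂_b − x_b ∂_a. Then for all indices a, b, c, e ∈ {1,…,d} and all x ∈ √d S^{d−1}: Σ_{m=1}^{đ_l} (L_{ab} Y_{l,m})(x) · (L_{ce} Y_{l,m})(x) = −√(đ_l/d) · P_l'(√d) · (δ_{ae} x_b x_c − δ_{be} x_a x_c − δ_{ac} x_b x_e + δ_{bc} x_a x_e). -/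
open MeasureTheory ProbabilityTheory

noncomputable section

open MvPolynomial

/-- The rotation generator `L_{ab} = X_a ∂_b − X_b ∂_a`. -/
def mvL {d : ℕ} (a b : Fin d) (f : MvPolynomial (Fin d) ℝ) : MvPolynomial (Fin d) ℝ :=
  X a * pderiv b f - X b * pderiv a f

/-! `L_{ab}` is the derivative along the rotation flow `t ↦ exp (t J_{ab}) x`, where
`J_{ab} x = x_a e_b - x_b e_a`; the flow preserves the sphere. Differentiating the addition formula
`∑ₘ Y_m(x) Y_m(x') = √đ_l P_l(⟪x, x'⟫ / √d)` in `x'` along `J_{ce}` and then in `x` along `J_{ab}`,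
at `x' = x`, the term with `P_l''` carries the factor `⟪J_{ab} x, x⟫ = 0`, and what remains is
`√(đ_l / d) P_l'(√d) ⟪J_{ab} x, J_{ce} x⟫`, the inner product being minus the δ-expression. -/

open scoped RealInnerProductSpace

theorem MvPolynomial.hasDerivAt_eval_comp {ι : Type*} [Fintype ι] [DecidableEq ι]
    {γ : ℝ → ι → ℝ} {γ' : ι → ℝ} {t : ℝ} (hγ : HasDerivAt γ γ' t) (p : MvPolynomial ι ℝ) :
    HasDerivAt (fun s => eval (γ s) p) (∑ i, eval (γ t) (pderiv i p) * γ' i) t := by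
  induction p using MvPolynomial.induction_on with
  | C r => simpa using hasDerivAt_const t r
  | add p q hp hq => simpa [add_mul, Finset.sum_add_distrib] using hp.fun_add hq
  | mul_X p i hp =>
    simp only [map_mul, eval_X]
    refine (hp.fun_mul (hasDerivAt_pi.1 hγ i)).congr_deriv ?_
    simp only [Derivation.leibniz, pderiv_X, map_add, map_mul, smul_eq_mul, eval_X,
      Pi.single_apply, add_mul, Finset.sum_add_distrib, Finset.sum_mul]
    simp only [mul_comm, add_comm, MonoidWithZeroHom.map_ite_one_zero, ite_mul, one_mul, zero_mul,
      mul_ite, mul_zero, Finset.sum_ite_eq, Finset.mem_univ, ↓reduceIte, mul_left_comm]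

section Rodrigues

variable {E : Type*} [NormedAddCommGroup E] [InnerProductSpace ℝ E]

/-- Rodrigues' formula: when `J` is skew-adjoint with `J³ = -J`, this is `exp (t J) x`. -/
def rodrigues (J : E → E) (t : ℝ) (x : E) : E :=
  x + Real.sin t • J x + (1 - Real.cos t) • J (J x)

variable (J : E → E)

@[simp]
theorem rodrigues_zero (x : E) : rodrigues J 0 x = x := by
  simp [rodrigues]

theorem hasDerivAt_rodrigues_zero (x : E) : HasDerivAt (fun t => rodrigues J t x) (J x) 0 := by
  have h := ((hasDerivAt_const 0 x).fun_add ((Real.hasDerivAt_sin 0).smul_const (J x))).fun_add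
    (((hasDerivAt_const 0 (1 : ℝ)).fun_sub (Real.hasDerivAt_cos 0)).smul_const (J (J x)))
  simpa [rodrigues] using h

variable {J}

theorem inner_apply_self_eq_zero_of_skew (hskew : ∀ x y, ⟪J x, y⟫ = -⟪x, J y⟫) (x : E) :
    ⟪J x, x⟫ = 0 := by
  have h := hskew x x
  rw [real_inner_comm (J x) x] at h
  linarith

theorem norm_rodrigues (hskew : ∀ x y, ⟪J x, y⟫ = -⟪x, J y⟫) (hcube : ∀ x, J (J (J x)) = -J x)
    (t : ℝ) (x : E) : ‖rodrigues J t x‖ = ‖x‖ := by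
  have h1 := inner_apply_self_eq_zero_of_skew hskew x
  have h2 := inner_apply_self_eq_zero_of_skew hskew (J x)
  have h3 := hskew (J x) x
  have h4 := hskew (J x) (J (J x))
  rw [hcube, inner_neg_right, neg_neg] at h4
  have hsq : ‖rodrigues J t x‖ ^ 2 = ‖x‖ ^ 2 := by
    simp only [rodrigues, ← real_inner_self_eq_norm_sq, inner_add_left, inner_add_right,
      inner_smul_left, inner_smul_right, RCLike.conj_to_real]
    rw [real_inner_comm (J x) x, real_inner_comm (J (J x)) x, real_inner_comm (J (J x)) (J x)]
    rw [h1, h2, h4]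
    linear_combination ⟪J x, J x⟫ * Real.sin_sq_add_cos_sq t + 2 * (1 - Real.cos t) * h3
  exact (sq_eq_sq₀ (norm_nonneg _) (norm_nonneg _)).1 hsq

end Rodrigues

section RotGen

variable {ι : Type*} [DecidableEq ι]

def rotGen (a b : ι) (x : EuclideanSpace ℝ ι) : EuclideanSpace ℝ ι :=
  x a • EuclideanSpace.single b 1 - x b • EuclideanSpace.single a 1

theorem rotGen_apply (a b : ι) (x : EuclideanSpace ℝ ι) (i : ι) :
    rotGen a b x i = (if i = b then x a else 0) - (if i = a then x b else 0) := by
  simp [rotGen, PiLp.single_apply]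

theorem inner_rotGen_left [Fintype ι] (a b : ι) (x y : EuclideanSpace ℝ ι) :
    ⟪rotGen a b x, y⟫ = -⟪x, rotGen a b y⟫ := by
  simp only [rotGen, inner_sub_left, inner_sub_right, inner_smul_left, inner_smul_right,
    EuclideanSpace.inner_single_left, EuclideanSpace.inner_single_right, Real.ringHom_apply,
    one_mul]
  ring

theorem rotGen_rotGen_rotGen (a b : ι) (x : EuclideanSpace ℝ ι) :
    rotGen a b (rotGen a b (rotGen a b x)) = -rotGen a b x := by
  ext i
  simp only [rotGen_apply, PiLp.neg_apply]
  split_ifs <;> subst_vars <;> simp_all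

theorem inner_rotGen_rotGen [Fintype ι] (a b c e : ι) (x : EuclideanSpace ℝ ι) :
    ⟪rotGen a b x, rotGen c e x⟫
      = -((if a = e then 1 else 0) * x b * x c - (if b = e then 1 else 0) * x a * x c
          - (if a = c then 1 else 0) * x b * x e + (if b = c then 1 else 0) * x a * x e) := by
  rw [rotGen]
  simp only [inner_sub_left, inner_smul_left, EuclideanSpace.inner_single_left, rotGen_apply,
    Real.ringHom_apply, one_mul]
  split_ifs <;> ring

end RotGen

theorem sphEval_mvL {d : ℕ} (a b : Fin d) (p : MvPolynomial (Fin d) ℝ)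
    (x : EuclideanSpace ℝ (Fin d)) :
    sphEval (mvL a b p) x = ∑ i, sphEval (pderiv i p) x * rotGen a b x i := by
  simp only [sphEval, mvL, map_sub, map_mul, eval_X, rotGen_apply, mul_sub, mul_ite, mul_zero,
    Finset.sum_sub_distrib, Finset.sum_ite_eq', Finset.mem_univ, ↓reduceIte]
  ring

section Kernel

variable {d : ℕ}

theorem hasDerivAt_sphEval_rodrigues_rotGen (a b : Fin d) (p : MvPolynomial (Fin d) ℝ)
    (x : EuclideanSpace ℝ (Fin d)) :
    HasDerivAt (fun t => sphEval p (rodrigues (rotGen a b) t x)) (sphEval (mvL a b p) x) 0 := by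
  have hγ : HasDerivAt (fun t => WithLp.ofLp (rodrigues (rotGen a b) t x))
      (WithLp.ofLp (rotGen a b x)) 0 :=
    ((PiLp.hasFDerivAt_ofLp (𝕜 := ℝ) 2 _).comp_hasDerivAt 0
      (hasDerivAt_rodrigues_zero (rotGen a b) x) :)
  have h := MvPolynomial.hasDerivAt_eval_comp hγ p
  rw [rodrigues_zero] at h
  rw [sphEval_mvL]
  exact h

theorem rodrigues_rotGen_mem_sphere (a b : Fin d) (t : ℝ) {r : ℝ} {x : EuclideanSpace ℝ (Fin d)}
    (hx : x ∈ Metric.sphere 0 r) : rodrigues (rotGen a b) t x ∈ Metric.sphere 0 r := by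
  rw [mem_sphere_zero_iff_norm] at hx ⊢
  rwa [norm_rodrigues (inner_rotGen_left a b) (rotGen_rotGen_rotGen a b)]

variable {ι : Type*} [Fintype ι] {Y : ι → MvPolynomial (Fin d) ℝ} {g : ℝ → ℝ} {r : ℝ}

theorem sum_sphEval_mul_sphEval_mvL
    (hY : ∀ x ∈ Metric.sphere 0 r, ∀ x' ∈ Metric.sphere 0 r,
      ∑ m, sphEval (Y m) x * sphEval (Y m) x' = g ⟪x, x'⟫)
    (hg : Differentiable ℝ g) (c e : Fin d) {x y : EuclideanSpace ℝ (Fin d)}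
    (hx : x ∈ Metric.sphere 0 r) (hy : y ∈ Metric.sphere 0 r) :
    ∑ m, sphEval (Y m) y * sphEval (mvL c e (Y m)) x = deriv g ⟪y, x⟫ * ⟪y, rotGen c e x⟫ := by
  have hsum : HasDerivAt
      (fun s => ∑ m, sphEval (Y m) y * sphEval (Y m) (rodrigues (rotGen c e) s x))
      (∑ m, sphEval (Y m) y * sphEval (mvL c e (Y m)) x) 0 :=
    HasDerivAt.fun_sum fun m _ => (hasDerivAt_sphEval_rodrigues_rotGen c e (Y m) x).const_mul _
  have hinner : HasDerivAt (fun s => ⟪y, rodrigues (rotGen c e) s x⟫) ⟪y, rotGen c e x⟫ 0 :=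
    (hasDerivAt_const 0 y).inner ℝ (hasDerivAt_rodrigues_zero _ x) |>.congr_deriv (by simp)
  have hker : HasDerivAt (fun s => g ⟪y, rodrigues (rotGen c e) s x⟫)
      (deriv g ⟪y, x⟫ * ⟪y, rotGen c e x⟫) 0 := by
    simpa [Function.comp_def] using (hg _).hasDerivAt.comp 0 hinner
  refine hsum.unique (hker.congr_of_eventuallyEq (Filter.Eventually.of_forall fun s => ?_))
  exact hY y hy _ (rodrigues_rotGen_mem_sphere c e s hx)

theorem sum_sphEval_mvL_mul_sphEval_mvL
    (hY : ∀ x ∈ Metric.sphere 0 r, ∀ x' ∈ Metric.sphere 0 r,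
      ∑ m, sphEval (Y m) x * sphEval (Y m) x' = g ⟪x, x'⟫)
    (hg : ContDiff ℝ 2 g) (a b c e : Fin d) {x : EuclideanSpace ℝ (Fin d)}
    (hx : x ∈ Metric.sphere 0 r) :
    ∑ m, sphEval (mvL a b (Y m)) x * sphEval (mvL c e (Y m)) x
      = deriv g (r ^ 2) * ⟪rotGen a b x, rotGen c e x⟫ := by
  have hsum : HasDerivAt
      (fun t => ∑ m, sphEval (Y m) (rodrigues (rotGen a b) t x) * sphEval (mvL c e (Y m)) x)
      (∑ m, sphEval (mvL a b (Y m)) x * sphEval (mvL c e (Y m)) x) 0 :=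
    HasDerivAt.fun_sum fun m _ => (hasDerivAt_sphEval_rodrigues_rotGen a b (Y m) x).mul_const _
  have hinner : ∀ v, HasDerivAt (fun t => ⟪rodrigues (rotGen a b) t x, v⟫) ⟪rotGen a b x, v⟫ 0 :=
    fun v => (hasDerivAt_rodrigues_zero _ x).inner ℝ (hasDerivAt_const 0 v)
      |>.congr_deriv (by simp)
  have hker : HasDerivAt
      (fun t => deriv g ⟪rodrigues (rotGen a b) t x, x⟫
        * ⟪rodrigues (rotGen a b) t x, rotGen c e x⟫)
      (deriv (deriv g) ⟪x, x⟫ * ⟪rotGen a b x, x⟫ * ⟪x, rotGen c e x⟫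
        + deriv g ⟪x, x⟫ * ⟪rotGen a b x, rotGen c e x⟫) 0 := by
    have hg' := (hg.differentiable_deriv_two _).hasDerivAt.comp 0 (hinner x)
    simpa only [Function.comp_def, rodrigues_zero] using hg'.fun_mul (hinner (rotGen c e x))
  have hdiff := hsum.unique (hker.congr_of_eventuallyEq (Filter.Eventually.of_forall fun t =>
    sum_sphEval_mul_sphEval_mvL hY (hg.differentiable two_ne_zero) c e hx
      (rodrigues_rotGen_mem_sphere a b t hx)))
  rw [hdiff, inner_apply_self_eq_zero_of_skew (inner_rotGen_left a b),
    real_inner_self_eq_norm_sq, mem_sphere_zero_iff_norm.1 hx]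
  ring

end Kernel

theorem rotation_generator_sum_general (d l : ℕ)
    (Y : (l : ℕ) → Fin (harmDim d l) → MvPolynomial (Fin d) ℝ)
    (P : Polynomial ℝ)
    (hP : ∀ x ∈ Metric.sphere (0 : EuclideanSpace ℝ (Fin d)) (Real.sqrt d),
      ∀ x' ∈ Metric.sphere (0 : EuclideanSpace ℝ (Fin d)) (Real.sqrt d),
      P.eval ((inner ℝ x x' : ℝ) / Real.sqrt d)
        = (1 / Real.sqrt (harmDim d l)) *
            ∑ m : Fin (harmDim d l), sphEval (Y l m) x * sphEval (Y l m) x') :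
    ∀ (a b c e : Fin d), ∀ x ∈ Metric.sphere (0 : EuclideanSpace ℝ (Fin d)) (Real.sqrt d),
    ∑ m : Fin (harmDim d l), sphEval (mvL a b (Y l m)) x * sphEval (mvL c e (Y l m)) x
      = -Real.sqrt ((harmDim d l : ℝ) / d) * P.derivative.eval (Real.sqrt d)
          * ((if a = e then 1 else 0) * x b * x c
            - (if b = e then 1 else 0) * x a * x c
            - (if a = c then 1 else 0) * x b * x e
            + (if b = c then 1 else 0) * x a * x e) := by
  intro a b c e x hx
  set g : ℝ → ℝ := fun u => Real.sqrt (harmDim d l) * P.eval (u / Real.sqrt d)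
  have hkernel : ∀ y ∈ Metric.sphere 0 (Real.sqrt d), ∀ y' ∈ Metric.sphere 0 (Real.sqrt d),
      ∑ m, sphEval (Y l m) y * sphEval (Y l m) y' = g ⟪y, y'⟫ := by
    intro y hy y' hy'
    simp only [g]
    rcases Nat.eq_zero_or_pos (harmDim d l) with hN | hN
    · have : IsEmpty (Fin (harmDim d l)) := hN ▸ Fin.isEmpty'
      simp [hN]
    · rw [hP y hy y' hy', ← mul_assoc, mul_one_div_cancel (by positivity), one_mul]
  have hg : ContDiff ℝ 2 g := by
    simpa [Function.comp_def] using
      contDiff_const.mul ((P.contDiff_aeval (𝕜 := ℝ) 2).comp (contDiff_id.div_const (Real.sqrt d)))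
  have hg' : HasDerivAt g
      (Real.sqrt (harmDim d l) * (P.derivative.eval (d / Real.sqrt d) * (1 / Real.sqrt d))) d :=
    (P.hasDerivAt _).comp _ ((hasDerivAt_id _).div_const _) |>.const_mul _
  rw [sum_sphEval_mvL_mul_sphEval_mvL hkernel hg a b c e hx, Real.sq_sqrt (Nat.cast_nonneg d),
    hg'.deriv, inner_rotGen_rotGen, Real.sqrt_div' _ (Nat.cast_nonneg d), Real.div_sqrt]
  ring

/-- for an orthonormal basis of degree-`l` spherical harmonics and the
associated Gegenbauer polynomial `P_l`, for all `a, b, c, e` and `x ∈ √d S^{d−1}`,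
`∑_m L_{ab}Y_{l,m}(x) · L_{ce}Y_{l,m}(x)
  = −√(đ_l/d) P_l'(√d) (δ_{ae} x_b x_c − δ_{be} x_a x_c − δ_{ac} x_b x_e + δ_{bc} x_a x_e)`. -/
theorem rotation_generator_sum (d l : ℕ) (hd : 2 ≤ d) (hl : 1 ≤ l)
    (Y : (l : ℕ) → Fin (harmDim d l) → MvPolynomial (Fin d) ℝ)
    (hhom : ∀ l m, (Y l m).IsHomogeneous l)
    (hharm : ∀ l m, mvLap (Y l m) = 0)
    (horth : ∀ l (m m' : Fin (harmDim d l)),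
      ∫ x, sphEval (Y l m) x * sphEval (Y l m') x ∂(sphereUniform d)
        = if m = m' then 1 else 0)
    (hspan : ∀ l (p : MvPolynomial (Fin d) ℝ), p.IsHomogeneous l → mvLap p = 0 →
      p ∈ Submodule.span ℝ (Set.range (Y l)))
    (P : Polynomial ℝ)
    (hP : ∀ x ∈ Metric.sphere (0 : EuclideanSpace ℝ (Fin d)) (Real.sqrt d),
      ∀ x' ∈ Metric.sphere (0 : EuclideanSpace ℝ (Fin d)) (Real.sqrt d),
      P.eval ((inner ℝ x x' : ℝ) / Real.sqrt d)
        = (1 / Real.sqrt (harmDim d l)) *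
            ∑ m : Fin (harmDim d l), sphEval (Y l m) x * sphEval (Y l m) x') :
    ∀ (a b c e : Fin d), ∀ x ∈ Metric.sphere (0 : EuclideanSpace ℝ (Fin d)) (Real.sqrt d),
    ∑ m : Fin (harmDim d l), sphEval (mvL a b (Y l m)) x * sphEval (mvL c e (Y l m)) x
      = -Real.sqrt ((harmDim d l : ℝ) / d) * P.derivative.eval (Real.sqrt d)
          * ((if a = e then 1 else 0) * x b * x c
            - (if b = e then 1 else 0) * x a * x c
            - (if a = c then 1 else 0) * x b * x e
            + (if b = c then 1 else 0) * x a * x e) :=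
  rotation_generator_sum_general d l Y P hP

end
end
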